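/- arXiv:2605.21647 — 3 statements merged into one kernel-verified Lean document; each statement's English description precedes it below -/
import Mathlib

section
/- Let α, γ be real numbers with α > 0 and γ > 0, let κ ≥ 0 and β > 0 satisfy β(α+γ) < 4, and for t ∈ ℝ let p_t ∈ [0,1] denote a fixed point of f_t(p) = 1/(1 + exp(β·(α − κ + t − p(α+γ)))). If t₁ < t₂ and p₁ = p_{t₁}, p₂ = p_{t₂} are fixed points for the respective taxes, then p₂ < p₁. That is, the equilibrium probability of the status-quo action is strictly decreasing in the tax rate t. -/
/-!
Write `σ` for the sigmoid, so that `1 / (1 + exp x) = σ (-x)` and a fixed point under tax `t`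
solves `p = σ (k p - u)` with `k = β (α + γ)` and `u = β (α - κ + t)`. The sigmoid is increasing and
`1/4`-Lipschitz, because `σ' = σ (1 - σ) ≤ 1/4`. If `u₁ < u₂` but `p₁ ≤ p₂`, then
`p₂ < σ (k p₂ - u₁) ≤ p₁ + k (p₂ - p₁) / 4`, which is impossible since `k / 4 < 1`.
-/

open Real NNReal

lemma Real.sigmoid_mul_one_sub_sigmoid_le (x : ℝ) : sigmoid x * (1 - sigmoid x) ≤ 4⁻¹ := by
  nlinarith [sq_nonneg (2 * sigmoid x - 1)]

lemma Real.lipschitzWith_sigmoid : LipschitzWith 4⁻¹ sigmoid := by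
  refine lipschitzWith_of_nnnorm_deriv_le differentiable_sigmoid fun x => ?_
  rw [← NNReal.coe_le_coe, coe_nnnorm, deriv_sigmoid, norm_of_nonneg]
  · simpa using sigmoid_mul_one_sub_sigmoid_le x
  · exact mul_nonneg (sigmoid_nonneg x) (sub_nonneg.2 (sigmoid_le_one x))

lemma Real.one_div_one_add_exp_eq_sigmoid (x : ℝ) : 1 / (1 + exp x) = sigmoid (-x) := by
  rw [sigmoid_def, neg_neg, one_div]

lemma fixedPoint_strictAnti_of_strictMono_of_lipschitzWith {g : ℝ → ℝ} {K : ℝ≥0}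
    (hg : StrictMono g) (hgK : LipschitzWith K g) {k u₁ u₂ p₁ p₂ : ℝ} (hk : 0 ≤ k)
    (hKk : K * k < 1) (hu : u₁ < u₂) (hp₁ : g (k * p₁ - u₁) = p₁)
    (hp₂ : g (k * p₂ - u₂) = p₂) : p₂ < p₁ := by
  by_contra! hle
  have hshift : p₂ < g (k * p₂ - u₁) := calc
    p₂ = g (k * p₂ - u₂) := hp₂.symm
    _ < g (k * p₂ - u₁) := hg (by linarith)
  have hlip : g (k * p₂ - u₁) - p₁ ≤ K * (k * (p₂ - p₁)) := by
    have := hgK.dist_le_mul (k * p₂ - u₁) (k * p₁ - u₁)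
    rw [hp₁, Real.dist_eq, Real.dist_eq, sub_sub_sub_cancel_right, ← mul_sub,
      abs_of_nonneg (mul_nonneg hk (sub_nonneg.2 hle))] at this
    exact (le_abs_self _).trans this
  nlinarith [K.coe_nonneg]

theorem qre_sb_fixedPoint_strictAnti_tax_general
    (α γ κ β : ℝ) (hα : 0 < α) (hγ : 0 < γ) (hβ : 0 < β)
    (hcontr : β * (α + γ) < 4)
    (t₁ t₂ p₁ p₂ : ℝ) (ht : t₁ < t₂)
    (hfix₁ : 1 / (1 + Real.exp (β * (α - κ + t₁ - p₁ * (α + γ)))) = p₁)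
    (hfix₂ : 1 / (1 + Real.exp (β * (α - κ + t₂ - p₂ * (α + γ)))) = p₂) :
    p₂ < p₁ := by
  have hfix (t p : ℝ) : 1 / (1 + exp (β * (α - κ + t - p * (α + γ)))) =
      sigmoid (β * (α + γ) * p - β * (α - κ + t)) := by
    rw [one_div_one_add_exp_eq_sigmoid]
    congr 1
    ring
  refine fixedPoint_strictAnti_of_strictMono_of_lipschitzWith sigmoid_strictMono
    lipschitzWith_sigmoid (by positivity) ?_ (by gcongr) ((hfix t₁ p₁).symm.trans hfix₁)
    ((hfix t₂ p₂).symm.trans hfix₂)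
  push_cast
  linarith

/-- Under the contraction condition, the equilibrium probability of the
status-quo action is strictly decreasing in the tax rate `t`. -/
theorem qre_sb_fixedPoint_strictAnti_tax
    (α γ κ β : ℝ) (hα : 0 < α) (hγ : 0 < γ) (hκ : 0 ≤ κ) (hβ : 0 < β)
    (hcontr : β * (α + γ) < 4)
    (t₁ t₂ p₁ p₂ : ℝ) (ht : t₁ < t₂)
    (hp₁ : p₁ ∈ Set.Icc (0:ℝ) 1) (hp₂ : p₂ ∈ Set.Icc (0:ℝ) 1)
    (hfix₁ : 1 / (1 + Real.exp (β * (α - κ + t₁ - p₁ * (α + γ)))) = p₁)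
    (hfix₂ : 1 / (1 + Real.exp (β * (α - κ + t₂ - p₂ * (α + γ)))) = p₂) :
    p₂ < p₁ :=
  qre_sb_fixedPoint_strictAnti_tax_general α γ κ β hα hγ hβ hcontr t₁ t₂ p₁ p₂ ht hfix₁ hfix₂
end

section
/- Let α, γ be real numbers with α > 0 and γ > 0, let κ ≥ 0 and β > 0 satisfy β(α+γ) < 4, and set t̄ = κ − (α − γ)/2. If t < t̄ and p_t ∈ [0,1] is a fixed point of f_t(p) = 1/(1 + exp(β·(α − κ + t − p(α+γ)))), then p_t > 1/2. -/
/-! Write `p = σ(-s)` with `σ` the logistic function and `s = β (α − κ + t − p (α + γ))`.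
If `p ≤ 1/2` then `s ≥ 0`, and since `σ' = σ (1 − σ) ≤ 1/4` we get `1/2 − p ≤ s/4`.
On the other hand `s = β (t − t̄) + β (α + γ) (1/2 − p) < 4 (1/2 − p)`, a contradiction. -/

open Real

lemma Real.sigmoid_sub_sigmoid_le {a b : ℝ} (hab : a ≤ b) :
    sigmoid b - sigmoid a ≤ (b - a) / 4 := by
  have hderiv (x : ℝ) : HasDerivAt (fun x ↦ x / 4 - sigmoid x)
      (1 / 4 - sigmoid x * (1 - sigmoid x)) x :=
    ((hasDerivAt_id x).div_const 4).sub (hasDerivAt_sigmoid x)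
  have hmono : Monotone fun x ↦ x / 4 - sigmoid x := by
    refine monotone_of_deriv_nonneg (fun x ↦ (hderiv x).differentiableAt) fun x ↦ ?_
    rw [(hderiv x).deriv]
    nlinarith [sq_nonneg (sigmoid x - 1 / 2)]
  linarith [hmono hab]

theorem qre_sb_below_threshold_general
    (α γ κ β : ℝ) (hβ : 0 < β)
    (hcontr : β * (α + γ) < 4)
    (tbar : ℝ) (htbar : tbar = κ - (α - γ) / 2)
    (t p : ℝ) (ht : t < tbar)
    (hfix : 1 / (1 + Real.exp (β * (α - κ + t - p * (α + γ)))) = p) :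
    p > 1/2 := by
  by_contra! hp
  set s := β * (α - κ + t - p * (α + γ)) with hs
  have hp_sigmoid : sigmoid (-s) = p := by rw [sigmoid_def, neg_neg, inv_eq_one_div, hfix]
  have hs_nonneg : 0 ≤ s := by
    have : sigmoid (-s) ≤ sigmoid 0 := by rw [hp_sigmoid, sigmoid_zero]; linarith
    linarith [sigmoid_le_iff.mp this]
  have hlower : 1 / 2 - p ≤ s / 4 := by
    have := sigmoid_sub_sigmoid_le (neg_nonpos.mpr hs_nonneg)
    rwa [sigmoid_zero, hp_sigmoid, zero_sub, neg_neg, ← one_div] at this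
  have hupper : s < 4 * (1 / 2 - p) := by
    have hs_split : s = β * (t - tbar) + β * (α + γ) * (1 / 2 - p) := by rw [hs, htbar]; ring
    have hshift : β * (t - tbar) < 0 := mul_neg_of_pos_of_neg hβ (sub_neg.mpr ht)
    have hslope : β * (α + γ) * (1 / 2 - p) ≤ 4 * (1 / 2 - p) :=
      mul_le_mul_of_nonneg_right hcontr.le (by linarith)
    linarith
  linarith

/-- Below the threshold tax `t̄ = κ − (α − γ)/2`, the status quo is more likely:
any fixed point satisfies `p_t > 1/2`. -/
theorem qre_sb_below_threshold
    (α γ κ β : ℝ) (hα : 0 < α) (hγ : 0 < γ) (hκ : 0 ≤ κ) (hβ : 0 < β)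
    (hcontr : β * (α + γ) < 4)
    (tbar : ℝ) (htbar : tbar = κ - (α - γ) / 2)
    (t p : ℝ) (ht : t < tbar) (hp : p ∈ Set.Icc (0:ℝ) 1)
    (hfix : 1 / (1 + Real.exp (β * (α - κ + t - p * (α + γ)))) = p) :
    p > 1/2 :=
  qre_sb_below_threshold_general α γ κ β hβ hcontr tbar htbar t p ht hfix
end

section
/- Let α, γ be real numbers with α > 0 and γ > 0, let κ ≥ 0 and β > 0 satisfy β(α+γ) < 4, and set t̄ = κ − (α − γ)/2. If t > t̄ and p_t ∈ [0,1] is a fixed point of f_t(p) = 1/(1 + exp(β·(α − κ + t − p(α+γ)))), then p_t < 1/2. -/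
/-!
Writing `u = p - 1/2`, the fixed-point equation reads `p = σ(β(α+γ)u - β(t - t̄))` for the
logistic function `σ`. Since `σ' = σ(1 - σ) ≤ 1/4`, the map `x ↦ x/4 - σ x` is monotone, so for
`u ≥ 0` we would get `p ≤ σ(-β(t - t̄)) + β(α+γ)u/4 < 1/2 + u = p`.
-/

open Real

namespace Real

lemma sigmoid_mul_one_sub_sigmoid_le_s9 (x : ℝ) : sigmoid x * (1 - sigmoid x) ≤ 1 / 4 := by
  nlinarith [sq_nonneg (sigmoid x - 1 / 2)]

lemma monotone_div_four_sub_sigmoid : Monotone fun x : ℝ => x / 4 - sigmoid x := by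
  have hderiv (x : ℝ) :
      HasDerivAt (fun x : ℝ => x / 4 - sigmoid x) (1 / 4 - sigmoid x * (1 - sigmoid x)) x :=
    ((hasDerivAt_id x).div_const 4).sub (hasDerivAt_sigmoid x)
  refine monotone_of_deriv_nonneg (fun x => (hderiv x).differentiableAt) fun x => ?_
  rw [(hderiv x).deriv]
  linarith [sigmoid_mul_one_sub_sigmoid_le_s9 x]

lemma sigmoid_sub_sigmoid_le_s9 {a b : ℝ} (hab : a ≤ b) : sigmoid b - sigmoid a ≤ (b - a) / 4 := by
  have := monotone_div_four_sub_sigmoid hab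
  simp only at this
  linarith

lemma sigmoid_lt_half {x : ℝ} (hx : x < 0) : sigmoid x < 1 / 2 := by
  simpa [sigmoid_zero] using sigmoid_lt hx

lemma lt_half_of_sigmoid_eq {k c p : ℝ} (hk₀ : 0 ≤ k) (hk₄ : k ≤ 4) (hc : c < 0)
    (hfix : sigmoid (k * (p - 1 / 2) + c) = p) : p < 1 / 2 := by
  by_contra! hp
  have hu : 0 ≤ p - 1 / 2 := by linarith
  have hlip : sigmoid (k * (p - 1 / 2) + c) - sigmoid c ≤ k * (p - 1 / 2) / 4 := by
    simpa using sigmoid_sub_sigmoid_le_s9 (by nlinarith : c ≤ k * (p - 1 / 2) + c)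
  nlinarith [sigmoid_lt_half hc]

end Real

theorem qre_sb_above_threshold_general
    (α γ κ β : ℝ) (hα : 0 < α) (hγ : 0 < γ) (hβ : 0 < β)
    (hcontr : β * (α + γ) < 4)
    (tbar : ℝ) (htbar : tbar = κ - (α - γ) / 2)
    (t p : ℝ) (ht : t > tbar)
    (hfix : 1 / (1 + Real.exp (β * (α - κ + t - p * (α + γ)))) = p) :
    p < 1/2 := by
  have hlogit : sigmoid (β * (α + γ) * (p - 1 / 2) + -(β * (t - tbar))) = p := by
    rw [sigmoid_def, ← one_div, htbar]
    convert hfix using 4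
    ring
  refine lt_half_of_sigmoid_eq (by positivity) hcontr.le ?_ hlogit
  exact neg_neg_of_pos (mul_pos hβ (sub_pos.mpr ht))

/-- Above the threshold tax `t̄ = κ − (α − γ)/2`, the alternative is more
likely: any fixed point satisfies `p_t < 1/2`. -/
theorem qre_sb_above_threshold
    (α γ κ β : ℝ) (hα : 0 < α) (hγ : 0 < γ) (hκ : 0 ≤ κ) (hβ : 0 < β)
    (hcontr : β * (α + γ) < 4)
    (tbar : ℝ) (htbar : tbar = κ - (α - γ) / 2)
    (t p : ℝ) (ht : t > tbar) (hp : p ∈ Set.Icc (0:ℝ) 1)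
    (hfix : 1 / (1 + Real.exp (β * (α - κ + t - p * (α + γ)))) = p) :
    p < 1/2 :=
  qre_sb_above_threshold_general α γ κ β hα hγ hβ hcontr tbar htbar t p ht hfix
end
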